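/- arXiv:2402.03086 — 3 statements merged into one kernel-verified Lean document; each statement's English description precedes it below -/
import Mathlib

section
/- Optimal dual completion bound: let ŷ ∈ K* and let ẑ be an optimal solution of the dual of the Lagrangian subproblem min_x {cᵀx + (b − Ax)ᵀŷ : Hx ⪰_C h}. Then L(ŷ, ẑ) = bᵀŷ + hᵀẑ is a valid lower bound on the optimal value of the primal problem min {cᵀx : Ax ⪰_K b, Hx ⪰_C h}, and among all z ∈ C* with Aᵀŷ + Hᵀz = c, the choice ẑ maximizes bᵀŷ + hᵀz. -/
open Matrix

/-- Optimal dual completion bound: let `yh ∈ K*` and `zh` be an optimal solution of the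
dual of the Lagrangian subproblem, i.e. `zh ∈ C*`, `Hᵀzh = c − Aᵀyh`, and `zh` maximizes
`hᵀz` among all such `z`. Then `bᵀyh + hᵀzh` is a valid lower bound on the primal optimal
value, and among all `z ∈ C*` with `Aᵀyh + Hᵀz = c`, `zh` maximizes `bᵀyh + hᵀz`. -/
theorem optimal_dual_completion {m n p : ℕ}
    (K : Set (Fin m → ℝ)) (C : Set (Fin p → ℝ))
    (hKclosed : IsClosed K) (hKconvex : Convex ℝ K)
    (hKcone : ∀ u ∈ K, ∀ t : ℝ, 0 ≤ t → t • u ∈ K)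
    (hCclosed : IsClosed C) (hCconvex : Convex ℝ C)
    (hCcone : ∀ u ∈ C, ∀ t : ℝ, 0 ≤ t → t • u ∈ C)
    (A : Matrix (Fin m) (Fin n) ℝ) (H : Matrix (Fin p) (Fin n) ℝ)
    (b : Fin m → ℝ) (h : Fin p → ℝ) (c : Fin n → ℝ)
    (yh : Fin m → ℝ) (zh : Fin p → ℝ)
    (hyK : ∀ u ∈ K, 0 ≤ yh ⬝ᵥ u)
    (hzC : ∀ u ∈ C, 0 ≤ zh ⬝ᵥ u)
    (hzeq : H.transpose.mulVec zh = c - A.transpose.mulVec yh)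
    (hzopt : ∀ z : Fin p → ℝ, (∀ u ∈ C, 0 ≤ z ⬝ᵥ u) →
      H.transpose.mulVec z = c - A.transpose.mulVec yh → h ⬝ᵥ z ≤ h ⬝ᵥ zh) :
    (∀ x : Fin n → ℝ, A.mulVec x - b ∈ K → H.mulVec x - h ∈ C →
        b ⬝ᵥ yh + h ⬝ᵥ zh ≤ c ⬝ᵥ x) ∧
    (∀ z : Fin p → ℝ, (∀ u ∈ C, 0 ≤ z ⬝ᵥ u) →
        A.transpose.mulVec yh + H.transpose.mulVec z = c →
        b ⬝ᵥ yh + h ⬝ᵥ z ≤ b ⬝ᵥ yh + h ⬝ᵥ zh) := by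
  constructor
  · intro x hxK hxC
    have h1 : 0 ≤ yh ⬝ᵥ (A.mulVec x - b) := hyK _ hxK
    have h2 : 0 ≤ zh ⬝ᵥ (H.mulVec x - h) := hzC _ hxC
    have hc : c ⬝ᵥ x = yh ⬝ᵥ A.mulVec x + zh ⬝ᵥ H.mulVec x := by
      have : c = A.transpose.mulVec yh + H.transpose.mulVec zh := by
        rw [hzeq]; ring_nf
      rw [this, add_dotProduct, Matrix.mulVec_transpose, Matrix.mulVec_transpose,
        Matrix.dotProduct_mulVec, Matrix.dotProduct_mulVec]
    simp only [dotProduct_sub] at h1 h2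
    rw [hc, dotProduct_comm b yh, dotProduct_comm h zh]
    linarith
  · intro z hz hzeq'
    have := hzopt z hz (by rw [← hzeq']; ring_nf)
    linarith
end

section
/- Closed-form completion for bounded variables: fix ŷ ∈ K* and set ẑˡ = max(c − Aᵀŷ, 0) and ẑᵘ = max(−(c − Aᵀŷ), 0) (componentwise). Then (ŷ, ẑˡ, ẑᵘ) is feasible for the dual max {bᵀy + lᵀzˡ − uᵀzᵘ : Aᵀy + zˡ − zᵘ = c, y ∈ K*, zˡ ≥ 0, zᵘ ≥ 0}, and among all feasible (zˡ, zᵘ) with this fixed ŷ, it maximizes the dual objective lᵀzˡ − uᵀzᵘ, provided l < u componentwise. -/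
open Matrix

/-- Closed-form dual completion for bounded variables: given `yh ∈ K*`, setting
`zl = max(c − Aᵀyh, 0)` and `zu = max(−(c − Aᵀyh), 0)` componentwise yields a feasible
completion (`Aᵀyh + zl − zu = c`, `zl ≥ 0`, `zu ≥ 0`) that, provided `l < u`, maximizes
the objective `lᵀzl − uᵀzu` among all feasible completions with the same fixed `yh`. -/
theorem bounded_variables_completion {m n : ℕ}
    (K : Set (Fin m → ℝ))
    (A : Matrix (Fin m) (Fin n) ℝ) (b : Fin m → ℝ) (c : Fin n → ℝ)
    (l u : Fin n → ℝ) (hlu : ∀ j, l j < u j)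
    (yh : Fin m → ℝ) (hyK : ∀ v ∈ K, 0 ≤ yh ⬝ᵥ v)
    (zl zu : Fin n → ℝ)
    (hzl : zl = fun j => max (c j - A.transpose.mulVec yh j) 0)
    (hzu : zu = fun j => max (-(c j - A.transpose.mulVec yh j)) 0) :
    (A.transpose.mulVec yh + zl - zu = c ∧ (∀ j, 0 ≤ zl j) ∧ (∀ j, 0 ≤ zu j)) ∧
    (∀ zl' zu' : Fin n → ℝ, (∀ j, 0 ≤ zl' j) → (∀ j, 0 ≤ zu' j) →
      A.transpose.mulVec yh + zl' - zu' = c →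
      l ⬝ᵥ zl' - u ⬝ᵥ zu' ≤ l ⬝ᵥ zl - u ⬝ᵥ zu) := by
  subst hzl hzu
  refine ⟨⟨?_, fun j => le_max_right _ _, fun j => le_max_right _ _⟩, ?_⟩
  · funext j
    simp only [Pi.add_apply, Pi.sub_apply]
    rcases le_total (c j - A.transpose.mulVec yh j) 0 with h | h
    · rw [max_eq_right h, max_eq_left (by linarith)]; ring
    · rw [max_eq_left h, max_eq_right (by linarith)]; ring
  · intro zl' zu' hzl' hzu' hfeas
    have hr : ∀ j, zl' j - zu' j = c j - A.transpose.mulVec yh j := by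
      intro j
      have := congrFun hfeas j
      simp only [Pi.add_apply, Pi.sub_apply] at this
      linarith
    simp only [dotProduct]
    rw [← Finset.sum_sub_distrib, ← Finset.sum_sub_distrib]
    apply Finset.sum_le_sum
    intro j _
    set r := c j - A.transpose.mulVec yh j with hrdef
    have h1 : zu' j ≥ max (-r) 0 := by
      have := hr j
      have := hzl' j
      have := hzu' j
      rcases le_total (-r) 0 with h | h
      · rw [max_eq_right h]; linarith
      · rw [max_eq_left h]; linarith
    have h2 : l j * max r 0 - u j * max (-r) 0 = l j * r + (l j - u j) * max (-r) 0 := by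
      rcases le_total r 0 with h | h
      · rw [max_eq_right h, max_eq_left (by linarith)]; ring
      · rw [max_eq_left h, max_eq_right (by linarith)]; ring
    have h3 : l j * zl' j - u j * zu' j = l j * r + (l j - u j) * zu' j := by
      rw [show zl' j = r + zu' j from by linarith [hr j]]; ring
    rw [h2, h3]
    have := hlu j
    nlinarith
end

section
/- Closed-form completion for convex quadratic objective: for Q = FᵀF positive definite (F invertible), fix ŷ ∈ K* and set ẑ = F^{-T}(c − Aᵀŷ), ẑ₀ = ½‖ẑ‖₂². Then Aᵀŷ + Fᵀẑ = c and (1, ẑ₀, ẑ) lies in the rotated second-order cone {(a, b, v) : 2ab ≥ ‖v‖², a, b ≥ 0}, and among all feasible completions with fixed ŷ, this choice maximizes bᵀŷ − z₀. -/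
open Matrix

/- Since `Fᵀ` is invertible, the equality constraint `Aᵀŷ + Fᵀz = c` pins down `z = ẑ` uniquely,
so the only freedom left is `z₀`. With first coordinate `1`, membership of `(1, z₀, ẑ)` in the
rotated cone says exactly `z₀ ≥ ½‖ẑ‖²`, so `bᵀŷ − z₀` is maximal at `z₀ = ½‖ẑ‖²`. -/

theorem Matrix.mulVec_eq_iff_eq_nonsing_inv_mulVec {ι α : Type*} [Fintype ι] [DecidableEq ι]
    [CommRing α] {M : Matrix ι ι α} (hM : IsUnit M.det) {v z : ι → α} :
    M *ᵥ z = v ↔ z = M⁻¹ *ᵥ v := by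
  constructor
  · rintro rfl
    rw [mulVec_mulVec, nonsing_inv_mul _ hM, one_mulVec]
  · rintro rfl
    rw [mulVec_mulVec, mul_nonsing_inv _ hM, one_mulVec]

def rotatedSOC (ι : Type*) [Fintype ι] : Set (ℝ × ℝ × (ι → ℝ)) :=
  {p | p.2.2 ⬝ᵥ p.2.2 ≤ 2 * p.1 * p.2.1 ∧ 0 ≤ p.1 ∧ 0 ≤ p.2.1}

theorem one_mem_rotatedSOC_iff {ι : Type*} [Fintype ι] {t : ℝ} {v : ι → ℝ} :
    (1, t, v) ∈ rotatedSOC ι ↔ 1 / 2 * (v ⬝ᵥ v) ≤ t := by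
  have hv : 0 ≤ v ⬝ᵥ v := by simpa using dotProduct_self_star_nonneg v
  simp only [rotatedSOC, Set.mem_ofPred_eq, zero_le_one, true_and]
  constructor
  · rintro ⟨h, -⟩
    linarith
  · intro h
    constructor <;> linarith

theorem quadratic_objective_completion_general {m n : ℕ}
    (A : Matrix (Fin m) (Fin n) ℝ) (b : Fin m → ℝ) (c : Fin n → ℝ)
    (F : Matrix (Fin n) (Fin n) ℝ) (hF : IsUnit F.det)
    (yh : Fin m → ℝ)
    (zh : Fin n → ℝ) (zh0 : ℝ)
    (hzh : zh = (F.transpose)⁻¹.mulVec (c - A.transpose.mulVec yh))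
    (hzh0 : zh0 = (1 / 2) * (zh ⬝ᵥ zh)) :
    (A.transpose.mulVec yh + F.transpose.mulVec zh = c ∧
      (zh ⬝ᵥ zh ≤ 2 * 1 * zh0 ∧ (0:ℝ) ≤ 1 ∧ 0 ≤ zh0)) ∧
    (∀ (z : Fin n → ℝ) (z0 : ℝ),
      A.transpose.mulVec yh + F.transpose.mulVec z = c →
      z ⬝ᵥ z ≤ 2 * 1 * z0 → 0 ≤ z0 →
      b ⬝ᵥ yh - z0 ≤ b ⬝ᵥ yh - zh0) := by
  have hFt : IsUnit Fᵀ.det := by rwa [det_transpose]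
  have feasible_iff (z : Fin n → ℝ) : Aᵀ *ᵥ yh + Fᵀ *ᵥ z = c ↔ z = zh := by
    rw [hzh, ← mulVec_eq_iff_eq_nonsing_inv_mulVec hFt, eq_sub_iff_add_eq']
  have hcone : (1, zh0, zh) ∈ rotatedSOC (Fin n) := one_mem_rotatedSOC_iff.2 hzh0.ge
  refine ⟨⟨(feasible_iff zh).2 rfl, hcone⟩, ?_⟩
  intro z z0 hz hz_cone hz0
  obtain rfl := (feasible_iff z).1 hz
  have : zh0 ≤ z0 := hzh0 ▸ one_mem_rotatedSOC_iff.1 ⟨hz_cone, zero_le_one, hz0⟩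
  linarith

/-- Closed-form dual completion for a convex quadratic objective: with `Q = FᵀF`
positive definite (`F` invertible), fixing `yh ∈ K*` and setting
`zh = F⁻ᵀ(c − Aᵀyh)`, `zh₀ = ½‖zh‖²`, one has `Aᵀyh + Fᵀzh = c`, the triple
`(1, zh₀, zh)` lies in the rotated second-order cone `{(a,b,v) : 2ab ≥ ‖v‖², a,b ≥ 0}`,
and this choice maximizes `bᵀyh − z₀` among all feasible completions with fixed `yh`. -/
theorem quadratic_objective_completion {m n : ℕ}
    (K : Set (Fin m → ℝ))
    (A : Matrix (Fin m) (Fin n) ℝ) (b : Fin m → ℝ) (c : Fin n → ℝ)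
    (F : Matrix (Fin n) (Fin n) ℝ) (hF : IsUnit F.det)
    (yh : Fin m → ℝ) (hyK : ∀ v ∈ K, 0 ≤ yh ⬝ᵥ v)
    (zh : Fin n → ℝ) (zh0 : ℝ)
    (hzh : zh = (F.transpose)⁻¹.mulVec (c - A.transpose.mulVec yh))
    (hzh0 : zh0 = (1 / 2) * (zh ⬝ᵥ zh)) :
    (A.transpose.mulVec yh + F.transpose.mulVec zh = c ∧
      (zh ⬝ᵥ zh ≤ 2 * 1 * zh0 ∧ (0:ℝ) ≤ 1 ∧ 0 ≤ zh0)) ∧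
    (∀ (z : Fin n → ℝ) (z0 : ℝ),
      A.transpose.mulVec yh + F.transpose.mulVec z = c →
      z ⬝ᵥ z ≤ 2 * 1 * z0 → 0 ≤ z0 →
      b ⬝ᵥ yh - z0 ≤ b ⬝ᵥ yh - zh0) :=
  quadratic_objective_completion_general A b c F hF yh zh zh0 hzh hzh0
end
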